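/- Identifiability of the judge-aware BTL model: Let N ≥ 2 and K ≥ 1. Suppose s, s̃ : Fin N → ℝ and γ, γ̃ : Fin K → ℝ with γ_k ≠ 0 and γ̃_k ≠ 0 for all k, and suppose there exist indices i₀ ≠ j₀ with s_{i₀} ≠ s_{j₀}. If γ_k (s_i − s_j) = γ̃_k (s̃_i − s̃_j) for all i ≠ j and all k, then there exist a ∈ ℝ \ {0} and b ∈ ℝ such that s̃_i = a·s_i + b for all i and γ̃_k = γ_k / a for all k. -/

import Mathlib

/-!
The reference pair fixes the scale `a = (s' i₀ - s' j₀) / (s i₀ - s j₀)`. Every judge's equation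
on that pair gives `γ' k = γ k / a`; feeding this back into one judge's equation on the pairs
`(i, i₀)` gives `s' i - s' i₀ = a * (s i - s i₀)`, i.e. `s'` is the affine image `a * s + b`.
-/

section

variable {F : Type*} [Field F]

theorem eq_div_div_of_mul_eq_mul {c c' d d' : F} (hc : c ≠ 0) (hd : d ≠ 0)
    (h : c * d = c' * d') : c' = c / (d' / d) := by
  have hd' : d' ≠ 0 := right_ne_zero_of_mul (h ▸ mul_ne_zero hc hd)
  field_simp
  linear_combination -h

theorem eq_mul_add_of_mul_sub_eq_div_mul_sub {a c x x₀ y y₀ : F} (hc : c ≠ 0) (ha : a ≠ 0)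
    (h : c * (x - x₀) = c / a * (y - y₀)) : y = a * x + (y₀ - a * x₀) := by
  field_simp at h
  linear_combination -h

end

theorem judge_aware_BTL_identifiability_general (N K : ℕ) (hK : 1 ≤ K)
    (s s' : Fin N → ℝ) (γ γ' : Fin K → ℝ)
    (hγ : ∀ k, γ k ≠ 0)
    (i₀ j₀ : Fin N) (hij : i₀ ≠ j₀) (hs : s i₀ ≠ s j₀)
    (h : ∀ i j : Fin N, i ≠ j → ∀ k : Fin K,
      γ k * (s i - s j) = γ' k * (s' i - s' j)) :
    ∃ a b : ℝ, a ≠ 0 ∧ (∀ i, s' i = a * s i + b) ∧ (∀ k, γ' k = γ k / a) := by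
  let k₀ : Fin K := ⟨0, hK⟩
  have hd : s i₀ - s j₀ ≠ 0 := sub_ne_zero.mpr hs
  have hd' : s' i₀ - s' j₀ ≠ 0 :=
    right_ne_zero_of_mul (h i₀ j₀ hij k₀ ▸ mul_ne_zero (hγ k₀) hd)
  set a := (s' i₀ - s' j₀) / (s i₀ - s j₀)
  have hγ' (k : Fin K) : γ' k = γ k / a :=
    eq_div_div_of_mul_eq_mul (hγ k) hd (h i₀ j₀ hij k)
  have ha : a ≠ 0 := div_ne_zero hd' hd
  refine ⟨a, s' i₀ - a * s i₀, ha, fun i => ?_, hγ'⟩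
  rcases eq_or_ne i i₀ with rfl | hi
  · ring
  · exact eq_mul_add_of_mul_sub_eq_div_mul_sub (hγ k₀) ha (hγ' k₀ ▸ h i i₀ hi k₀)

theorem judge_aware_BTL_identifiability (N K : ℕ) (hN : 2 ≤ N) (hK : 1 ≤ K)
    (s s' : Fin N → ℝ) (γ γ' : Fin K → ℝ)
    (hγ : ∀ k, γ k ≠ 0) (hγ' : ∀ k, γ' k ≠ 0)
    (i₀ j₀ : Fin N) (hij : i₀ ≠ j₀) (hs : s i₀ ≠ s j₀)
    (h : ∀ i j : Fin N, i ≠ j → ∀ k : Fin K,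
      γ k * (s i - s j) = γ' k * (s' i - s' j)) :
    ∃ a b : ℝ, a ≠ 0 ∧ (∀ i, s' i = a * s i + b) ∧ (∀ k, γ' k = γ k / a) :=
  judge_aware_BTL_identifiability_general N K hK s s' γ γ' hγ i₀ j₀ hij hs h
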